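/- arXiv:2411.12725 — 2 statements merged into one kernel-verified Lean document; each statement's English description precedes it below -/
import Mathlib

section
/- Let π* be a strict Nash equilibrium of a finite game (hence pure, playing action α*(i) for each player i). For q = 0, there exists ε > 0 such that for every mixed strategy profile π ≠ π* with ‖π − π*‖ ≤ ε, ⟨v^0(π), π − π*⟩ < 0. -/
open Finset

variable {N : Type*} [Fintype N] [DecidableEq N]
variable {A : N → Type*} [∀ i, Fintype (A i)] [∀ i, DecidableEq (A i)]

/-- `p` is a mixed strategy (a point of the simplex) over a finite action set. -/
def IsMixed {α : Type*} [Fintype α] (p : α → ℝ) : Prop :=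
  (∀ a, 0 ≤ p a) ∧ ∑ a, p a = 1

/-- A mixed strategy profile: one mixed strategy per player. -/
def IsProfile {N : Type*} [Fintype N] {A : N → Type*} [∀ i, Fintype (A i)]
    (π : ∀ i, A i → ℝ) : Prop := ∀ i, IsMixed (π i)

/-- The pure strategy playing action `α` with probability one. -/
def pureStrat {α : Type*} [DecidableEq α] (a : α) : α → ℝ :=
  fun b => if b = a then 1 else 0

/-- Expected utility of reward function `R` under the mixed profile `π`,
where players randomise independently. -/
def expUtil (R : (∀ i, A i) → ℝ) (π : ∀ i, A i → ℝ) : ℝ :=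
  ∑ a : ∀ i, A i, (∏ i, π i (a i)) * R a

/-- Unilateral deviation of player `i` to the mixed strategy `p`. -/
def dev (π : ∀ i, A i → ℝ) (i : N) (p : A i → ℝ) : ∀ j, A j → ℝ :=
  Function.update π i p

/-- Nash equilibrium: no profitable unilateral mixed deviation. -/
def IsNash (R : N → (∀ i, A i) → ℝ) (π : ∀ i, A i → ℝ) : Prop :=
  IsProfile π ∧ ∀ i (p : A i → ℝ), IsMixed p →
    expUtil (R i) (dev π i p) ≤ expUtil (R i) π

/-- Strict Nash equilibrium: every unilateral deviation to a different mixed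
strategy strictly decreases the deviator's utility. -/
def IsStrictNash (R : N → (∀ i, A i) → ℝ) (π : ∀ i, A i → ℝ) : Prop :=
  IsProfile π ∧ ∀ i (p : A i → ℝ), IsMixed p → p ≠ π i →
    expUtil (R i) (dev π i p) < expUtil (R i) π

/-- The `0`-gradient of player `i` at profile `π`. -/
noncomputable def grad0 (R : N → (∀ i, A i) → ℝ) (π : ∀ i, A i → ℝ)
    (i : N) (α : A i) : ℝ :=
  expUtil (R i) (dev π i (pureStrat α)) -
    (∑ β, expUtil (R i) (dev π i (pureStrat β))) / (Fintype.card (A i))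

/-- Euclidean distance between two profiles. -/
noncomputable def profDist (π π' : ∀ i, A i → ℝ) : ℝ :=
  Real.sqrt (∑ i, ∑ α, (π i α - π' i α) ^ 2)

lemma isMixed_pureStrat {α : Type*} [Fintype α] [DecidableEq α] (a : α) :
    IsMixed (pureStrat a) := by
  constructor
  · intro b; unfold pureStrat; positivity
  · simp [pureStrat]

lemma prod_dev (π : ∀ i, A i → ℝ) (i : N) (p : A i → ℝ) (a : ∀ j, A j) :
    ∏ j, dev π i p j (a j) = p (a i) * ∏ j ∈ univ.erase i, π j (a j) := by
  rw [← Finset.mul_prod_erase univ _ (mem_univ i)]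
  congr 1
  · simp [dev]
  · exact Finset.prod_congr rfl fun j hj => by
      rw [dev, Function.update_of_ne (Finset.ne_of_mem_erase hj)]

lemma expUtil_dev_eq (R : (∀ i, A i) → ℝ) (π : ∀ i, A i → ℝ) (i : N) (p : A i → ℝ) :
    expUtil R (dev π i p) = ∑ α, p α * expUtil R (dev π i (pureStrat α)) := by
  unfold expUtil
  simp only [prod_dev, Finset.mul_sum]
  rw [Finset.sum_comm]
  refine Finset.sum_congr rfl fun a _ => ?_
  simp [pureStrat, mul_ite, mul_comm, mul_assoc, mul_left_comm]

lemma continuous_expUtil_dev (R : (∀ i, A i) → ℝ) (i : N) (p : A i → ℝ) :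
    Continuous fun π : ∀ i, A i → ℝ => expUtil R (dev π i p) := by
  unfold expUtil
  simp only [prod_dev]
  apply continuous_finset_sum
  intro a _
  apply Continuous.mul _ continuous_const
  apply Continuous.mul continuous_const
  apply continuous_finset_prod
  intro j _
  exact (continuous_apply (a j)).comp (continuous_apply j)

/-- near a strict Nash equilibrium `π*`, for `q = 0`,
`⟨v⁰(π), π − π*⟩ < 0` for every nearby profile `π ≠ π*`. -/
theorem strictNash_grad0_local (R : N → (∀ i, A i) → ℝ)
    (πs : ∀ i, A i → ℝ) (h : IsStrictNash R πs) :
    ∃ ε > (0 : ℝ), ∀ π : ∀ i, A i → ℝ, IsProfile π → π ≠ πs →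
      profDist π πs ≤ ε →
      ∑ i, ∑ α, grad0 R π i α * (π i α - πs i α) < 0 := by
  obtain ⟨hprof, hstrict⟩ := h
  -- strict Nash is pure
  have hpure : ∀ i, ∃ α : A i, πs i = pureStrat α := by
    intro i
    by_contra hc
    push_neg at hc
    have hlt : ∀ α : A i, expUtil (R i) (dev πs i (pureStrat α)) < expUtil (R i) πs :=
      fun α => hstrict i (pureStrat α) (isMixed_pureStrat α) (fun he => hc α he.symm)
    have hs1 : ∑ α, πs i α = 1 := (hprof i).2
    have hdev : expUtil (R i) πs
        = ∑ α, πs i α * expUtil (R i) (dev πs i (pureStrat α)) := by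
      conv_lhs => rw [← Function.update_eq_self i πs]
      exact expUtil_dev_eq _ _ _ _
    obtain ⟨α0, hα0⟩ : ∃ α, 0 < πs i α := by
      by_contra hno; push_neg at hno
      have : ∑ α, πs i α ≤ 0 := Finset.sum_nonpos fun α _ => hno α
      linarith
    have hcontr : expUtil (R i) πs < expUtil (R i) πs := by
      calc expUtil (R i) πs
          = ∑ α, πs i α * expUtil (R i) (dev πs i (pureStrat α)) := hdev
        _ < ∑ α, πs i α * expUtil (R i) πs := by
            apply Finset.sum_lt_sum
            · intro α _; exact mul_le_mul_of_nonneg_left (hlt α).le ((hprof i).1 α)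
            · exact ⟨α0, mem_univ _, (mul_lt_mul_iff_right₀ hα0).2 (hlt α0)⟩
        _ = expUtil (R i) πs := by rw [← Finset.sum_mul, hs1, one_mul]
    exact lt_irrefl _ hcontr
  choose astar hastar using hpure
  set G : ∀ i, A i → (∀ j, A j → ℝ) → ℝ := fun i α π =>
    expUtil (R i) (dev π i (pureStrat α))
      - expUtil (R i) (dev π i (pureStrat (astar i))) with hG
  have hGneg : ∀ i (α : A i), α ≠ astar i → G i α πs < 0 := by
    intro i α hα
    have h1 : dev πs i (pureStrat (astar i)) = πs := by
      conv_rhs => rw [← Function.update_eq_self i πs]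
      rw [dev, hastar i]
    have h2 : pureStrat α ≠ πs i := by
      rw [hastar i]; intro he
      have := congrFun he α
      simp [pureStrat, hα] at this
    have := hstrict i (pureStrat α) (isMixed_pureStrat α) h2
    simp only [hG, h1]
    linarith
  have hev : ∀ᶠ π in nhds πs, ∀ i (α : A i), α ≠ astar i → G i α π < 0 := by
    rw [Filter.eventually_all]
    intro i
    rw [Filter.eventually_all]
    intro α
    by_cases hα : α = astar i
    · exact Filter.Eventually.of_forall fun π hp => absurd hα hp
    · have hc : Continuous (G i α) :=
        (continuous_expUtil_dev (R i) i (pureStrat α)).sub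
          (continuous_expUtil_dev (R i) i (pureStrat (astar i)))
      exact ((hc.tendsto πs).eventually (gt_mem_nhds (hGneg i α hα))).mono
        fun π hp _ => hp
  obtain ⟨r, hr, hball⟩ := Metric.eventually_nhds_iff.mp hev
  refine ⟨r/2, by linarith, ?_⟩
  intro π hπ hne hd
  have hdist : dist π πs ≤ profDist π πs := by
    have h0 : 0 ≤ profDist π πs := Real.sqrt_nonneg _
    rw [dist_pi_le_iff h0]
    intro i
    rw [dist_pi_le_iff h0]
    intro α
    rw [Real.dist_eq, ← Real.sqrt_sq_eq_abs]
    unfold profDist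
    apply Real.sqrt_le_sqrt
    calc (π i α - πs i α)^2 ≤ ∑ β, (π i β - πs i β)^2 :=
          Finset.single_le_sum (f := fun β => (π i β - πs i β)^2)
            (fun β _ => sq_nonneg _) (mem_univ α)
      _ ≤ ∑ j, ∑ β, (π j β - πs j β)^2 :=
          Finset.single_le_sum (f := fun j => ∑ β, (π j β - πs j β)^2)
            (fun j _ => Finset.sum_nonneg fun β _ => sq_nonneg _) (mem_univ i)
  have hGπ : ∀ i (α : A i), α ≠ astar i → G i α π < 0 :=
    hball (lt_of_le_of_lt (le_trans hdist hd) (by linarith))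
  have hkey : ∀ i, ∑ α, grad0 R π i α * (π i α - πs i α) = ∑ α, π i α * G i α π := by
    intro i
    have hπ1 : ∑ α, π i α = 1 := (hπ i).2
    have hs1 : ∑ α, πs i α = 1 := (hprof i).2
    have hU : ∑ α, expUtil (R i) (dev π i (pureStrat α)) * πs i α
        = expUtil (R i) (dev π i (pureStrat (astar i))) := by
      rw [hastar i]; simp [pureStrat, mul_ite]
    have hcomm : ∑ x, expUtil (R i) (dev π i (pureStrat x)) * π i x
        = ∑ x, π i x * expUtil (R i) (dev π i (pureStrat x)) :=
      Finset.sum_congr rfl fun α _ => mul_comm _ _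
    simp only [grad0, hG, sub_mul, mul_sub, Finset.sum_sub_distrib, ← Finset.mul_sum,
      ← Finset.sum_mul]
    rw [hπ1, hs1, hU, hcomm]
    ring
  rw [Finset.sum_congr rfl fun i _ => hkey i]
  obtain ⟨i0, hi0⟩ := Function.ne_iff.mp hne
  have hα0ex : ∃ α0, α0 ≠ astar i0 ∧ 0 < π i0 α0 := by
    by_contra hc; push_neg at hc
    have hz : ∀ α, α ≠ astar i0 → π i0 α = 0 := fun α hα =>
      le_antisymm (hc α hα) ((hπ i0).1 α)
    apply hi0
    have h1 : π i0 (astar i0) = 1 := by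
      have hs := (hπ i0).2
      rwa [Finset.sum_eq_single (astar i0) (fun b _ hb => hz b hb)
        (fun hmem => absurd (mem_univ _) hmem)] at hs
    funext α
    rw [hastar i0]
    by_cases hα : α = astar i0
    · simp [pureStrat, hα, h1]
    · simp [pureStrat, hα, hz α hα]
  obtain ⟨α0, hα0ne, hα0pos⟩ := hα0ex
  have hnonpos : ∀ i, ∀ α : A i, π i α * G i α π ≤ 0 := by
    intro i α
    by_cases hα : α = astar i
    · simp [hG, hα]
    · exact mul_nonpos_of_nonneg_of_nonpos ((hπ i).1 α) (hGπ i α hα).le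
  have h2 : ∑ α, π i0 α * G i0 α π < 0 := by
    have hsl := Finset.sum_lt_sum (s := univ) (f := fun α => π i0 α * G i0 α π)
      (g := fun _ => (0:ℝ)) (fun α _ => hnonpos i0 α)
      ⟨α0, mem_univ _, mul_neg_of_pos_of_neg hα0pos (hGπ i0 α0 hα0ne)⟩
    simpa using hsl
  have hfin := Finset.sum_lt_sum (s := univ) (f := fun i => ∑ α, π i α * G i α π)
    (g := fun _ => (0:ℝ)) (fun i _ => Finset.sum_nonpos fun α _ => hnonpos i α)
    ⟨i0, mem_univ _, h2⟩
  simpa using hfin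
end

section
/- If a mixed strategy profile π* of a finite game satisfies both: (i) ⟨v^0(π*), π − π*⟩ ≤ 0 for all profiles π, and (ii) there exists ε > 0 such that ⟨v^0(π), π − π*⟩ < 0 for all π ≠ π* with ‖π − π*‖ ≤ ε, then π* is a strict Nash equilibrium. -/
open Finset

variable {N : Type*} [Fintype N] [DecidableEq N]
variable {A : N → Type*} [∀ i, Fintype (A i)] [∀ i, DecidableEq (A i)]

set_option linter.unusedSectionVars false in
lemma prod_update_eval (π : ∀ i, A i → ℝ) (i : N) (q : A i → ℝ) (a : ∀ j, A j) :
    ∏ j, Function.update π i q j (a j) = q (a i) * ∏ j ∈ univ.erase i, π j (a j) := by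
  rw [← Finset.mul_prod_erase univ _ (mem_univ i)]
  congr 1
  · simp
  · exact Finset.prod_congr rfl fun j hj => by
      rw [Function.update_of_ne (Finset.ne_of_mem_erase hj)]

lemma expUtil_dev_linear (Ri : (∀ i, A i) → ℝ) (π : ∀ i, A i → ℝ) (i : N) (p : A i → ℝ) :
    expUtil Ri (dev π i p) = ∑ α, p α * expUtil Ri (dev π i (pureStrat α)) := by
  unfold expUtil dev
  simp only [prod_update_eval, Finset.mul_sum]
  rw [Finset.sum_comm]
  refine Finset.sum_congr rfl fun a _ => ?_
  simp only [pureStrat, mul_ite, ite_mul, one_mul, zero_mul, mul_zero]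
  rw [Finset.sum_ite_eq univ (a i)]
  simp [mul_assoc]

lemma grad0_inner (R : N → (∀ i, A i) → ℝ) (πs : ∀ i, A i → ℝ) (hπs : IsProfile πs)
    (i : N) (p : A i → ℝ) (hp : IsMixed p) :
    ∑ α, grad0 R πs i α * (p α - πs i α)
      = expUtil (R i) (dev πs i p) - expUtil (R i) πs := by
  have hself : expUtil (R i) πs = expUtil (R i) (dev πs i (πs i)) := by
    rw [dev, Function.update_eq_self]
  rw [hself, expUtil_dev_linear, expUtil_dev_linear]
  unfold grad0
  set c : ℝ := (∑ β, expUtil (R i) (dev πs i (pureStrat β))) / (Fintype.card (A i)) with hc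
  set U : A i → ℝ := fun α => expUtil (R i) (dev πs i (pureStrat α)) with hU
  have expand : ∑ α, (U α - c) * (p α - πs i α)
      = ((∑ α, p α * U α) - ∑ α, πs i α * U α) - c * ((∑ α, p α) - ∑ α, πs i α) := by
    calc ∑ α, (U α - c) * (p α - πs i α)
        = ∑ α, (p α * U α - πs i α * U α - c * (p α - πs i α)) :=
          Finset.sum_congr rfl fun α _ => by ring
      _ = ((∑ α, p α * U α) - ∑ α, πs i α * U α) - c * ((∑ α, p α) - ∑ α, πs i α) := by
          rw [Finset.sum_sub_distrib, Finset.sum_sub_distrib, ← Finset.mul_sum,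
            Finset.sum_sub_distrib]
  rw [expand, hp.2, (hπs i).2]
  ring


/-- a profile satisfying both variational conditions for the
`0`-gradient is a strict Nash equilibrium. -/
theorem grad0_varIneqs_strictNash (R : N → (∀ i, A i) → ℝ)
    (πs : ∀ i, A i → ℝ) (hπs : IsProfile πs)
    (h1 : ∀ π : ∀ i, A i → ℝ, IsProfile π →
      ∑ i, ∑ α, grad0 R πs i α * (π i α - πs i α) ≤ 0)
    (h2 : ∃ ε > (0 : ℝ), ∀ π : ∀ i, A i → ℝ, IsProfile π → π ≠ πs →
      profDist π πs ≤ ε →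
      ∑ i, ∑ α, grad0 R π i α * (π i α - πs i α) < 0) :
    IsStrictNash R πs := by
  refine ⟨hπs, fun i p hp hne => ?_⟩
  obtain ⟨ε, hε, h2⟩ := h2
  obtain ⟨α₀, hα₀⟩ := Function.ne_iff.1 hne
  set D : ℝ := Real.sqrt (∑ α, (p α - πs i α) ^ 2) with hD
  have hDpos : 0 < D := by
    apply Real.sqrt_pos.2
    apply Finset.sum_pos' (fun β _ => sq_nonneg _)
    exact ⟨α₀, mem_univ α₀, by have := sub_ne_zero.2 hα₀; positivity⟩
  set t : ℝ := min 1 (ε / D) with htdef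
  have ht0 : 0 < t := lt_min one_pos (div_pos hε hDpos)
  have ht1 : t ≤ 1 := min_le_left _ _
  set q : A i → ℝ := fun α => πs i α + t * (p α - πs i α) with hq
  have hqm : IsMixed q := by
    constructor
    · intro α
      have h1' := (hπs i).1 α
      have h2' := hp.1 α
      have hq' : q α = (1 - t) * πs i α + t * p α := by simp only [hq]; ring
      rw [hq']
      exact add_nonneg (mul_nonneg (by linarith) h1') (mul_nonneg ht0.le h2')
    · simp only [hq]
      rw [Finset.sum_add_distrib, ← Finset.mul_sum, Finset.sum_sub_distrib, hp.2, (hπs i).2]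
      ring
  have hprof : IsProfile (dev πs i q) := by
    intro j
    by_cases hj : j = i
    · subst hj; simpa [dev] using hqm
    · simpa [dev, Function.update_of_ne hj] using hπs j
  have hπne : dev πs i q ≠ πs := by
    intro h
    have hqe : q = πs i := by
      have := congrFun h i
      simpa [dev] using this
    have := congrFun hqe α₀
    simp only [hq] at this
    have ht : t * (p α₀ - πs i α₀) = 0 := by linarith
    rcases mul_eq_zero.1 ht with h' | h'
    · exact ht0.ne' h'
    · exact hα₀ (by linarith)
  have hdist : profDist (dev πs i q) πs ≤ ε := by
    unfold profDist
    have hs : ∑ j, ∑ α, (dev πs i q j α - πs j α) ^ 2 = t ^ 2 * ∑ α, (p α - πs i α) ^ 2 := by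
      rw [Finset.sum_eq_single i]
      · rw [Finset.mul_sum]
        refine Finset.sum_congr rfl fun α _ => ?_
        simp only [dev, Function.update_self, hq]
        ring
      · intro j _ hj
        apply Finset.sum_eq_zero
        intro α _
        simp [dev, Function.update_of_ne hj]
      · simp
    rw [hs, Real.sqrt_mul (sq_nonneg t), Real.sqrt_sq ht0.le]
    calc t * D ≤ (ε / D) * D :=
          mul_le_mul_of_nonneg_right (min_le_right _ _) hDpos.le
      _ = ε := div_mul_cancel₀ ε hDpos.ne'
  have hlt := h2 _ hprof hπne hdist
  have hdd : ∀ (r : A i → ℝ), dev (dev πs i q) i r = dev πs i r := by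
    intro r; unfold dev; rw [Function.update_idem]
  have hgrad : ∀ α, grad0 R (dev πs i q) i α = grad0 R πs i α := by
    intro α; unfold grad0; simp only [hdd]
  have hsum : ∑ j, ∑ α, grad0 R (dev πs i q) j α * (dev πs i q j α - πs j α)
      = t * ∑ α, grad0 R πs i α * (p α - πs i α) := by
    rw [Finset.sum_eq_single i]
    · rw [Finset.mul_sum]
      refine Finset.sum_congr rfl fun α _ => ?_
      rw [hgrad]
      simp only [dev, Function.update_self, hq]
      ring
    · intro j _ hj
      apply Finset.sum_eq_zero
      intro α _
      simp [dev, Function.update_of_ne hj]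
    · simp
  rw [hsum] at hlt
  have hG : ∑ α, grad0 R πs i α * (p α - πs i α) < 0 := by nlinarith
  rw [grad0_inner R πs hπs i p hp] at hG
  linarith
end
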